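/- arXiv:math/9201266 — 2 statements merged into one kernel-verified Lean document; each statement's English description precedes it below -/
import Mathlib

section
/- Let A be a symmetric positive definite n×n real matrix, let b ∈ ℝ^n with ‖b‖ = 1, and suppose the Krylov subspace K^j(A,b) has dimension j with j < n. Then for every v ∈ ℝ^n with v ∉ K^j(A,b) and every real M > 0 there exists a symmetric positive definite matrix Ã ∈ V̂(N_j(A,b)) such that ‖b − Ãv‖ > M. -/
open Matrix

/-- Reinterpret a vector in `Fin n → ℝ` as an element of `ℝ^n` with the
Euclidean norm (the types are definitionally equal). -/
def toE {n : ℕ} (x : Fin n → ℝ) : EuclideanSpace ℝ (Fin n) := WithLp.toLp 2 x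

/-- The j-th Krylov subspace `K^j(A,b) = span {b, Ab, …, A^{j-1} b}` in `ℝ^n`
with the Euclidean norm. -/
noncomputable def krylov {n : ℕ} (A : Matrix (Fin n) (Fin n) ℝ)
    (b : EuclideanSpace ℝ (Fin n)) (j : ℕ) :
    Submodule ℝ (EuclideanSpace ℝ (Fin n)) :=
  Submodule.span ℝ {v | ∃ i < j, v = toE ((A ^ i).mulVec b)}

/-- `Ã` is indistinguishable from `A` by the Krylov information
`N_j(A,b) = (b, Ab, …, A^j b)`, i.e. `Ã ∈ V̂(N_j(A,b))`. -/
def indist {n : ℕ} (A Atil : Matrix (Fin n) (Fin n) ℝ)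
    (b : EuclideanSpace ℝ (Fin n)) (j : ℕ) : Prop :=
  ∀ i ≤ j, (Atil ^ i).mulVec b = (A ^ i).mulVec b

lemma vecMulVec_mulVec' {n : ℕ} (w x : Fin n → ℝ) :
    (Matrix.vecMulVec w w).mulVec x = (w ⬝ᵥ x) • w := by
  ext i
  simp [vecMulVec_apply, mulVec, dotProduct, Finset.mul_sum, mul_assoc, mul_comm, mul_left_comm]

lemma smul_vecMulVec_posSemidef {n : ℕ} (w : Fin n → ℝ) (c : ℝ) (hc : 0 ≤ c) :
    (c • Matrix.vecMulVec w w).PosSemidef := by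
  rw [posSemidef_iff_dotProduct_mulVec]; constructor
  · unfold Matrix.IsHermitian
    ext i j
    simp [vecMulVec_apply, mul_comm]
  · intro x
    have h : (c • Matrix.vecMulVec w w).mulVec x = (c * (w ⬝ᵥ x)) • w := by
      rw [smul_mulVec, vecMulVec_mulVec', smul_smul]
    rw [h]
    simp only [dotProduct_smul, smul_eq_mul, star_trivial]
    rw [dotProduct_comm]
    nlinarith [mul_self_nonneg (x ⬝ᵥ w)]

lemma inner_eq_dot {n : ℕ} (x y : EuclideanSpace ℝ (Fin n)) :
    (inner ℝ x y : ℝ) = (x : Fin n → ℝ) ⬝ᵥ (y : Fin n → ℝ) := by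
  simp [PiLp.inner_apply, RCLike.inner_apply, dotProduct, mul_comm]

theorem stmt2 {n j : ℕ} (A : Matrix (Fin n) (Fin n) ℝ)
    (b : EuclideanSpace ℝ (Fin n)) (hA : A.PosDef) (hb : ‖b‖ = 1)
    (hdim : Module.finrank ℝ (krylov A b j) = j) (hjn : j < n)
    (v : EuclideanSpace ℝ (Fin n)) (hv : v ∉ krylov A b j)
    (M : ℝ) (hM : 0 < M) :
    ∃ Atil : Matrix (Fin n) (Fin n) ℝ, Atil.PosDef ∧ indist A Atil b j ∧
      ‖b - toE (Atil.mulVec v)‖ > M := by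
  classical
  set K := krylov A b j with hK
  set p : EuclideanSpace ℝ (Fin n) := (K.orthogonalProjectionOnto v : EuclideanSpace ℝ (Fin n))
    with hp
  set w : EuclideanSpace ℝ (Fin n) := v - p with hwdef
  have hworth : w ∈ Kᗮ := K.sub_starProjection_mem_orthogonal v
  have hwne : w ≠ 0 := by
    intro h
    apply hv
    have : v = p := by rwa [hwdef, sub_eq_zero] at h
    rw [this]
    exact (K.orthogonalProjectionOnto v).2
  have hwpos : (0:ℝ) < ‖w‖ := norm_pos_iff.mpr hwne
  -- the zero dot products
  have hz : ∀ i < j, (w : Fin n → ℝ) ⬝ᵥ ((A ^ i).mulVec b) = 0 := by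
    intro i hi
    have hm : toE ((A ^ i).mulVec b) ∈ K := Submodule.subset_span ⟨i, hi, rfl⟩
    have h0 : (inner ℝ (toE ((A ^ i).mulVec b)) w : ℝ) = 0 :=
      (Submodule.mem_orthogonal K w).mp hworth _ hm
    rw [inner_eq_dot] at h0
    rw [dotProduct_comm]
    exact h0
  -- the perturbation size
  set D : ℝ := ‖b - toE (A.mulVec v)‖ with hD
  set c : ℝ := (M + D + 1) / ‖w‖ ^ 3 with hc
  have hDpos : 0 ≤ D := norm_nonneg _
  have hcpos : 0 < c := by
    apply div_pos (by linarith) (by positivity)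
  set W : Matrix (Fin n) (Fin n) ℝ := c • Matrix.vecMulVec (w : Fin n → ℝ) (w : Fin n → ℝ)
    with hW
  have hWmul : ∀ x : Fin n → ℝ, W.mulVec x = (c * ((w : Fin n → ℝ) ⬝ᵥ x)) • (w : Fin n → ℝ) := by
    intro x
    rw [hW, smul_mulVec, vecMulVec_mulVec', smul_smul]
  refine ⟨A + W, hA.add_posSemidef (smul_vecMulVec_posSemidef _ _ hcpos.le), ?_, ?_⟩
  · -- indistinguishability
    intro i hi
    induction i with
    | zero => simp
    | succ k ih =>
      have hk : k < j := hi
      rw [pow_succ', pow_succ', ← mulVec_mulVec, ← mulVec_mulVec, ih hk.le,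
        add_mulVec, hWmul, hz k hk]
      simp
  · -- the norm bound
    have hwv : (w : Fin n → ℝ) ⬝ᵥ (v : Fin n → ℝ) = ‖w‖ ^ 2 := by
      have hv' : v = w + p := by rw [hwdef]; abel
      have h1 : (inner ℝ w v : ℝ) = ‖w‖ ^ 2 := by
        rw [hv', inner_add_right]
        have h2 : (inner ℝ w p : ℝ) = 0 := by
          rw [real_inner_comm]
          exact (Submodule.mem_orthogonal K w).mp hworth _ (K.orthogonalProjectionOnto v).2
        rw [h2, real_inner_self_eq_norm_sq]
        ring
      rw [← inner_eq_dot, h1]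
    have key : b - toE ((A + W).mulVec v)
        = (b - toE (A.mulVec v)) - (c * ‖w‖ ^ 2) • w := by
      have h4 : toE ((A + W).mulVec v) = toE (A.mulVec v) + (c * ‖w‖ ^ 2) • w := by
        rw [add_mulVec, hWmul, hwv]
        simp [toE]
      rw [h4]
      abel
    have hnorm : ‖(c * ‖w‖ ^ 2) • w‖ = c * ‖w‖ ^ 3 := by
      rw [norm_smul, Real.norm_eq_abs, abs_of_nonneg (by positivity)]
      ring
    have hcw : c * ‖w‖ ^ 3 = M + D + 1 := by
      rw [hc]
      field_simp
    have h3 : ‖(c * ‖w‖ ^ 2) • w‖ - ‖b - toE (A.mulVec v)‖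
        ≤ ‖b - toE ((A + W).mulVec v)‖ := by
      rw [key, norm_sub_rev (b - toE (A.mulVec v)) ((c * ‖w‖ ^ 2) • w)]
      exact norm_sub_norm_le _ _
    rw [hnorm, hcw] at h3
    rw [← hD] at h3
    linarith
end

section
/- Let A be a symmetric n×n real matrix, let b ∈ ℝ^n with ‖b‖ = 1, and suppose the Krylov subspace K^{j+1}(A,b) has dimension j+1 with j+1 ≤ n. Then there exists a symmetric n×n real matrix Ā ∈ V̂(N_j(A,b)) such that b is a cyclic vector for Ā, i.e., K^n(Ā,b) = span{b, Āb, …, Ā^{n−1}b} = ℝ^n; equivalently, b is not orthogonal to any eigenvector of Ā. -/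
open Matrix

open scoped RealInnerProductSpace
open Finset
open InnerProductSpace

section Aux

variable {n : ℕ} (A : Matrix (Fin n) (Fin n) ℝ) (b : EuclideanSpace ℝ (Fin n))

/-- The Krylov vectors `A^i b`. -/
noncomputable def kf : Fin n → EuclideanSpace ℝ (Fin n) := fun i => toE ((A ^ (i : ℕ)).mulVec b)

lemma finWF (n : ℕ) : WellFoundedLT (Fin n) := inferInstance

/-- Orthonormal basis obtained by Gram–Schmidt from the Krylov vectors. -/
noncomputable def kq : OrthonormalBasis (Fin n) ℝ (EuclideanSpace ℝ (Fin n)) :=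
  @gramSchmidtOrthonormalBasis ℝ _ _ _ _ (Fin n) _ _ (finWF n) _ _ finrank_euclideanSpace (kf A b)

/-- ℕ-indexed version of `kq` (0 beyond the range). -/
noncomputable def kqq (m : ℕ) : EuclideanSpace ℝ (Fin n) :=
  if h : m < n then kq A b ⟨m, h⟩ else 0

variable (j : ℕ)

/-- subdiagonal entries of the tridiagonal matrix -/
noncomputable def kbeta (m : ℕ) : ℝ :=
  if m < j then ⟪kqq A b (m + 1), toE (A.mulVec (kqq A b m))⟫ else 1

/-- diagonal entries -/
noncomputable def kd (m : ℕ) : ℝ :=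
  if m < j then ⟪kqq A b m, toE (A.mulVec (kqq A b m))⟫ else 0

/-- the tridiagonal matrix -/
noncomputable def kT : Matrix (Fin n) (Fin n) ℝ := Matrix.of fun k i =>
  if (k : ℕ) = (i : ℕ) then kd A b j (i : ℕ)
  else if (k : ℕ) = (i : ℕ) + 1 then kbeta A b j (i : ℕ)
  else if (i : ℕ) = (k : ℕ) + 1 then kbeta A b j (k : ℕ)
  else 0

/-- the tridiagonal matrix conjugated back: `Ā = Q T Qᵀ` entrywise. -/
noncomputable def kAbar : Matrix (Fin n) (Fin n) ℝ := Matrix.of fun r c =>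
  ∑ k, ∑ i, kq A b k r * kT A b j k i * kq A b i c

lemma kT_symm (k i : Fin n) : kT A b j k i = kT A b j i k := by
  unfold kT
  simp only [Matrix.of_apply]
  rcases eq_or_ne (k : ℕ) (i : ℕ) with h1 | h1
  · obtain rfl : k = i := Fin.ext h1
    rfl
  · rcases eq_or_ne (k : ℕ) ((i : ℕ) + 1) with h2 | h2
    · rw [if_neg h1, if_pos h2, if_neg (show ¬(i : ℕ) = (k : ℕ) by omega),
        if_neg (show ¬(i : ℕ) = (k : ℕ) + 1 by omega), if_pos h2]
    · rcases eq_or_ne (i : ℕ) ((k : ℕ) + 1) with h3 | h3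
      · rw [if_neg h1, if_neg h2, if_pos h3, if_neg (show ¬(i : ℕ) = (k : ℕ) by omega),
          if_pos h3]
      · rw [if_neg h1, if_neg h2, if_neg h3, if_neg (show ¬(i : ℕ) = (k : ℕ) by omega),
          if_neg h3, if_neg h2]

lemma kT_zero_of_gt {k i : Fin n} (h : (i : ℕ) + 1 < (k : ℕ)) : kT A b j k i = 0 := by
  unfold kT
  simp only [Matrix.of_apply]
  rw [if_neg (by omega), if_neg (by omega), if_neg (by omega)]

lemma kAbar_symm : (kAbar A b j).IsSymm := by
  ext i k
  simp only [kAbar, Matrix.transpose_apply, Matrix.of_apply]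
  rw [Finset.sum_comm]
  refine Finset.sum_congr rfl fun l _ => Finset.sum_congr rfl fun m _ => ?_
  rw [kT_symm A b j m l]
  ring

/-- Euclidean inner product as a sum. -/
lemma einner (x y : EuclideanSpace ℝ (Fin n)) : ⟪x, y⟫ = ∑ c, x c * y c := by
  simp [PiLp.inner_apply, RCLike.inner_apply, starRingEnd_apply, mul_comm]

/-- symmetric matrix moves across the inner product -/
lemma kswap (hA : A.IsSymm) (x y : EuclideanSpace ℝ (Fin n)) :
    ⟪x, toE (A.mulVec y)⟫ = ⟪y, toE (A.mulVec x)⟫ := by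
  rw [einner, einner]
  show x ⬝ᵥ (A *ᵥ y) = y ⬝ᵥ (A *ᵥ x)
  rw [dotProduct_mulVec, ← mulVec_transpose, hA.eq, dotProduct_comm]

/-- The key computation: `Ā qᵢ = ∑ₖ Tₖᵢ qₖ`. -/
lemma kAbar_mulVec (i : Fin n) :
    toE ((kAbar A b j).mulVec (kq A b i)) = ∑ k, kT A b j k i • kq A b k := by
  have horth : ∀ l m : Fin n, ∑ c, kq A b l c * kq A b m c = if l = m then 1 else 0 := by
    intro l m
    rcases eq_or_ne l m with rfl | h
    · rw [if_pos rfl, ← einner, real_inner_self_eq_norm_sq, (kq A b).orthonormal.1 l]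
      norm_num
    · rw [if_neg h, ← einner]
      exact (kq A b).orthonormal.2 h
  ext r
  show ∑ c, kAbar A b j r c * kq A b i c = _
  have : ∑ c, kAbar A b j r c * kq A b i c
      = ∑ k, ∑ l, kq A b k r * kT A b j k l * (∑ c, kq A b l c * kq A b i c) := by
    simp only [kAbar, Matrix.of_apply, Finset.sum_mul, Finset.mul_sum]
    rw [Finset.sum_comm]
    refine Finset.sum_congr rfl fun k _ => ?_
    rw [Finset.sum_comm]
    refine Finset.sum_congr rfl fun l _ => Finset.sum_congr rfl fun c _ => by ring
  rw [this]
  have : ∀ k : Fin n, ∑ l, kq A b k r * kT A b j k l * (∑ c, kq A b l c * kq A b i c)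
      = kq A b k r * kT A b j k i := by
    intro k
    rw [Finset.sum_eq_single i]
    · rw [horth, if_pos rfl, mul_one]
    · intro l _ hl
      rw [horth, if_neg hl, mul_zero]
    · intro h; exact absurd (Finset.mem_univ i) h
  rw [Finset.sum_congr rfl fun k _ => this k]
  have : (∑ k, kT A b j k i • kq A b k) r = ∑ k, kT A b j k i * kq A b k r := by
    rw [WithLp.ofLp_sum, Finset.sum_apply]
    rfl
  rw [this]
  exact Finset.sum_congr rfl fun k _ => mul_comm _ _

lemma inner_zero_of_notmem {ι : Type*} {F : Type*} [NormedAddCommGroup F]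
    [InnerProductSpace ℝ F] {v : ι → F} (hv : Orthonormal ℝ v) {s : Set ι} {k : ι}
    (hk : k ∉ s) {y : F} (hy : y ∈ Submodule.span ℝ (v '' s)) : ⟪v k, y⟫ = 0 := by
  induction hy using Submodule.span_induction with
  | mem x hx =>
    obtain ⟨l, hl, rfl⟩ := hx
    exact hv.2 fun h => hk (h ▸ hl)
  | zero => simp
  | add x y _ _ hx hy => rw [inner_add_right, hx, hy, add_zero]
  | smul c x _ hx => rw [inner_smul_right, hx, mul_zero]

lemma krylov_eq_span {m : ℕ} (hm : m ≤ n) :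
    krylov A b m = Submodule.span ℝ (kf A b '' {k : Fin n | (k : ℕ) < m}) := by
  unfold krylov
  congr 1
  ext v
  constructor
  · rintro ⟨i, him, rfl⟩
    exact ⟨⟨i, lt_of_lt_of_le him hm⟩, him, rfl⟩
  · rintro ⟨k, hk, rfl⟩
    exact ⟨(k : ℕ), hk, rfl⟩

lemma kf_li {j : ℕ} (hjn : j + 1 ≤ n)
    (hdim : Module.finrank ℝ (krylov A b (j + 1)) = j + 1) :
    LinearIndependent ℝ (kf A b ∘ Fin.castLE hjn) := by
  rw [linearIndependent_iff_card_eq_finrank_span]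
  have hr : Set.range (kf A b ∘ Fin.castLE hjn) = kf A b '' {k : Fin n | (k : ℕ) < j + 1} := by
    ext v
    constructor
    · rintro ⟨i, rfl⟩
      exact ⟨Fin.castLE hjn i, i.2, rfl⟩
    · rintro ⟨k, hk, rfl⟩
      exact ⟨⟨(k : ℕ), hk⟩, by simp [Fin.castLE]⟩
  rw [Set.finrank, hr, ← krylov_eq_span A b hjn, hdim, Fintype.card_fin]

lemma gsn_ne_zero {j : ℕ} (hjn : j + 1 ≤ n)
    (hdim : Module.finrank ℝ (krylov A b (j + 1)) = j + 1)
    {k : Fin n} (hk : (k : ℕ) ≤ j) :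
    @gramSchmidtNormed ℝ _ _ _ _ (Fin n) _ _ (finWF n) (kf A b) k ≠ 0 := by
  have hli := kf_li A b hjn hdim
  have h1 : LinearIndependent ℝ (kf A b ∘ ((↑) : Set.Iic k → Fin n)) := by
    have he : ∀ x : Set.Iic k, ((x : Fin n) : ℕ) < j + 1 := fun x =>
      lt_of_le_of_lt (le_trans (Fin.le_def.mp x.2) hk) (Nat.lt_succ_self j)
    have := hli.comp (fun x : Set.Iic k => (⟨((x : Fin n) : ℕ), he x⟩ : Fin (j + 1)))
      (fun x y hxy => by
        apply Subtype.ext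
        apply Fin.ext
        simpa using congrArg Fin.val hxy)
    convert this using 1
    rfl
  have h2 := @gramSchmidt_ne_zero_coe ℝ _ _ _ _ (Fin n) _ _ (finWF n) _ k h1
  intro h0
  have h0' : (‖@gramSchmidt ℝ _ _ _ _ (Fin n) _ _ (finWF n) (kf A b) k‖⁻¹ : ℝ) •
      @gramSchmidt ℝ _ _ _ _ (Fin n) _ _ (finWF n) (kf A b) k = 0 := h0
  rcases smul_eq_zero.mp h0' with h | h
  · exact h2 (norm_eq_zero.mp (inv_eq_zero.mp h))
  · exact h2 h

set_option maxHeartbeats 2000000 in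
lemma kq_eq_gsn {j : ℕ} (hjn : j + 1 ≤ n)
    (hdim : Module.finrank ℝ (krylov A b (j + 1)) = j + 1)
    {k : Fin n} (hk : (k : ℕ) ≤ j) :
    kq A b k = @gramSchmidtNormed ℝ _ _ _ _ (Fin n) _ _ (finWF n) (kf A b) k := by
  exact @gramSchmidtOrthonormalBasis_apply ℝ _ _ _ _ (Fin n) _ _ (finWF n) _ _
    finrank_euclideanSpace (kf A b) k (gsn_ne_zero A b hjn hdim hk)

lemma kq_span {j : ℕ} (hjn : j + 1 ≤ n)
    (hdim : Module.finrank ℝ (krylov A b (j + 1)) = j + 1)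
    {m : ℕ} (hm : m ≤ j) :
    Submodule.span ℝ (kq A b '' {k : Fin n | (k : ℕ) ≤ m}) = krylov A b (m + 1) := by
  have hmn : m < n := by omega
  have hs : {k : Fin n | (k : ℕ) ≤ m} = Set.Iic (⟨m, hmn⟩ : Fin n) := by
    ext k
    simp [Set.mem_Iic, Fin.le_def]
  have himg : kq A b '' Set.Iic (⟨m, hmn⟩ : Fin n)
      = @gramSchmidtNormed ℝ _ _ _ _ (Fin n) _ _ (finWF n) (kf A b) '' Set.Iic (⟨m, hmn⟩ : Fin n) := by
    apply Set.image_congr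
    intro x hx
    exact kq_eq_gsn A b hjn hdim (le_trans (Fin.le_def.mp hx) hm)
  have e1 := @span_gramSchmidtNormed ℝ _ _ _ _ (Fin n) _ _ (finWF n)
    (kf A b) (Set.Iic (⟨m, hmn⟩ : Fin n))
  have e2 := @span_gramSchmidt_Iic ℝ _ _ _ _ (Fin n) _ _ (finWF n) (kf A b) (⟨m, hmn⟩ : Fin n)
  have h2 : kf A b '' Set.Iic (⟨m, hmn⟩ : Fin n) = kf A b '' {k : Fin n | (k : ℕ) < m + 1} := by
    ext k
    simp [Set.mem_Iic, Fin.le_def, Nat.lt_succ_iff]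
  rw [hs, himg, e1, e2, h2, ← krylov_eq_span A b (show m + 1 ≤ n by omega)]

lemma kf_notmem {j : ℕ} (hjn : j + 1 ≤ n)
    (hdim : Module.finrank ℝ (krylov A b (j + 1)) = j + 1)
    {m : ℕ} (hm : m + 1 ≤ j) : toE ((A ^ (m + 1)).mulVec b) ∉ krylov A b (m + 1) := by
  have hli := kf_li A b hjn hdim
  intro hmem
  have hx : (⟨m + 1, by omega⟩ : Fin (j + 1)) ∉ {i : Fin (j + 1) | (i : ℕ) < m + 1} := by
    simp
  apply hli.notMem_span_image hx
  have hsets : Fin.castLE hjn '' {i : Fin (j + 1) | (i : ℕ) < m + 1}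
      = {k : Fin n | (k : ℕ) < m + 1} := by
    ext k
    constructor
    · rintro ⟨i, hi, rfl⟩
      exact hi
    · intro hk
      have hk' : (k : ℕ) < m + 1 := hk
      refine ⟨⟨(k : ℕ), by omega⟩, by simpa using hk', ?_⟩
      apply Fin.ext
      simp [Fin.castLE]
  rw [Set.image_comp, hsets, ← krylov_eq_span A b (show m + 1 ≤ n by omega)]
  exact hmem

lemma krylov_mono {m m' : ℕ} (h : m ≤ m') : krylov A b m ≤ krylov A b m' := by
  apply Submodule.span_mono
  rintro v ⟨i, hi, rfl⟩
  exact ⟨i, by omega, rfl⟩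

lemma mem_krylov {i m : ℕ} (h : i < m) : toE ((A ^ i).mulVec b) ∈ krylov A b m :=
  Submodule.subset_span ⟨i, h, rfl⟩

lemma mulVec_mem_krylov {m : ℕ} {x : EuclideanSpace ℝ (Fin n)} (hx : x ∈ krylov A b m) :
    toE (A.mulVec x) ∈ krylov A b (m + 1) := by
  induction hx using Submodule.span_induction with
  | mem v hv =>
    obtain ⟨i, hi, rfl⟩ := hv
    have : A.mulVec ((A ^ i).mulVec b) = (A ^ (i + 1)).mulVec b := by
      rw [mulVec_mulVec, ← pow_succ']
    rw [show toE (A.mulVec (toE ((A ^ i).mulVec b))) = toE ((A ^ (i + 1)).mulVec b) from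
      congrArg toE this]
    exact mem_krylov A b (by omega)
  | zero =>
    have : A.mulVec 0 = 0 := mulVec_zero A
    rw [show toE (A.mulVec (0 : EuclideanSpace ℝ (Fin n))) = toE 0 from congrArg toE this]
    exact Submodule.zero_mem _
  | add x y _ _ hx hy =>
    have : A.mulVec (x + y) = A.mulVec x + A.mulVec y := mulVec_add A x y
    rw [WithLp.ofLp_add, show toE (A.mulVec (x + y)) = toE (A.mulVec x) + toE (A.mulVec y) from
      congrArg toE this]
    exact Submodule.add_mem _ hx hy
  | smul c x _ hx =>
    have : A.mulVec (c • x) = c • A.mulVec x := by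
      rw [mulVec_smul]
    rw [WithLp.ofLp_smul, show toE (A.mulVec (c • x)) = c • toE (A.mulVec x) from congrArg toE this]
    exact Submodule.smul_mem _ c hx

lemma kqq_eq (i : Fin n) : kqq A b (i : ℕ) = kq A b i := by
  unfold kqq
  rw [dif_pos i.isLt]

lemma kq_mem_span {s : Set (Fin n)} {k : Fin n} (hk : k ∈ s) :
    kq A b k ∈ Submodule.span ℝ (kq A b '' s) :=
  Submodule.subset_span (Set.mem_image_of_mem _ hk)

lemma kAq_mem {j : ℕ} (hjn : j + 1 ≤ n)
    (hdim : Module.finrank ℝ (krylov A b (j + 1)) = j + 1)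
    {k : Fin n} (hk : (k : ℕ) + 1 ≤ j) :
    toE (A.mulVec (kq A b k)) ∈
      Submodule.span ℝ (kq A b '' {l : Fin n | (l : ℕ) ≤ (k : ℕ) + 1}) := by
  rw [kq_span A b hjn hdim hk]
  have h1 : kq A b k ∈ krylov A b ((k : ℕ) + 1) := by
    rw [← kq_span A b hjn hdim (by omega : (k : ℕ) ≤ j)]
    exact kq_mem_span A b (le_refl (k : ℕ))
  exact mulVec_mem_krylov A b h1

lemma kT_col (hA : A.IsSymm) {j : ℕ} (hjn : j + 1 ≤ n)
    (hdim : Module.finrank ℝ (krylov A b (j + 1)) = j + 1)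
    {i : Fin n} (hi : (i : ℕ) < j) (k : Fin n) :
    kT A b j k i = ⟪kq A b k, toE (A.mulVec (kq A b i))⟫ := by
  unfold kT
  simp only [Matrix.of_apply]
  rcases eq_or_ne (k : ℕ) (i : ℕ) with h1 | h1
  · obtain rfl : k = i := Fin.ext h1
    rw [if_pos rfl]
    unfold kd
    rw [if_pos hi, kqq_eq]
  · rw [if_neg h1]
    rcases eq_or_ne (k : ℕ) ((i : ℕ) + 1) with h2 | h2
    · rw [if_pos h2]
      unfold kbeta
      rw [if_pos hi, kqq_eq, show (i : ℕ) + 1 = (k : ℕ) from h2.symm, kqq_eq]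
    · rw [if_neg h2]
      rcases eq_or_ne (i : ℕ) ((k : ℕ) + 1) with h3 | h3
      · rw [if_pos h3]
        have hkj : (k : ℕ) < j := by omega
        unfold kbeta
        rw [if_pos hkj, kqq_eq, show (k : ℕ) + 1 = (i : ℕ) from h3.symm, kqq_eq,
          kswap A hA]
      · rw [if_neg h3]
        rcases lt_or_gt_of_ne h1 with h4 | h4
        · -- k < i, in fact k + 1 < i : use symmetry and orthogonality
          rw [kswap A hA]
          symm
          refine inner_zero_of_notmem (kq A b).orthonormal
            (s := {l : Fin n | (l : ℕ) ≤ (k : ℕ) + 1}) (k := i) (by simp; omega) ?_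
          exact kAq_mem A b hjn hdim (by omega)
        · -- k > i + 1
          symm
          refine inner_zero_of_notmem (kq A b).orthonormal
            (s := {l : Fin n | (l : ℕ) ≤ (i : ℕ) + 1}) (k := k) (by simp; omega) ?_
          exact kAq_mem A b hjn hdim (by omega)

lemma kAbar_eq_A_on_q (hA : A.IsSymm) {j : ℕ} (hjn : j + 1 ≤ n)
    (hdim : Module.finrank ℝ (krylov A b (j + 1)) = j + 1)
    {i : Fin n} (hi : (i : ℕ) < j) :
    toE ((kAbar A b j).mulVec (kq A b i)) = toE (A.mulVec (kq A b i)) := by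
  rw [kAbar_mulVec]
  have : ∀ k : Fin n, kT A b j k i • kq A b k
      = ⟪kq A b k, toE (A.mulVec (kq A b i))⟫ • kq A b k := fun k => by
    rw [kT_col A b hA hjn hdim hi k]
  rw [Finset.sum_congr rfl fun k _ => this k]
  exact (kq A b).sum_repr' (toE (A.mulVec (kq A b i)))

lemma kAbarq_mem (j : ℕ) (i : Fin n) :
    toE ((kAbar A b j).mulVec (kq A b i)) ∈
      Submodule.span ℝ (kq A b '' {l : Fin n | (l : ℕ) ≤ (i : ℕ) + 1}) := by
  rw [kAbar_mulVec]
  apply Submodule.sum_mem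
  intro k _
  by_cases hk : (k : ℕ) ≤ (i : ℕ) + 1
  · exact Submodule.smul_mem _ _ (kq_mem_span A b hk)
  · rw [kT_zero_of_gt A b j (by omega), zero_smul]
    exact Submodule.zero_mem _

lemma kT_subdiag (j : ℕ) {m : ℕ} (h1 : m + 1 < n) (h2 : m < n) :
    kT A b j ⟨m + 1, h1⟩ ⟨m, h2⟩ = kbeta A b j m := by
  unfold kT
  simp only [Matrix.of_apply]
  rw [if_neg (by simp), if_pos (by simp)]

lemma kbeta_ne_zero {j : ℕ} (hjn : j + 1 ≤ n)
    (hdim : Module.finrank ℝ (krylov A b (j + 1)) = j + 1)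
    {m : ℕ} (hm : m < j) : kbeta A b j m ≠ 0 := by
  intro h0
  have hmn : m < n := by omega
  have hm1n : m + 1 < n := by omega
  -- `A` maps the span of the first m+1 basis vectors into itself
  have hW : ∀ x ∈ Submodule.span ℝ (kq A b '' {l : Fin n | (l : ℕ) ≤ m}),
      toE (A.mulVec x) ∈ Submodule.span ℝ (kq A b '' {l : Fin n | (l : ℕ) ≤ m}) := by
    intro x hx
    induction hx using Submodule.span_induction with
    | mem v hv =>
      obtain ⟨l, hl, rfl⟩ := hv
      have hlm : (l : ℕ) ≤ m := hl
      rcases lt_or_eq_of_le hlm with hlt | heq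
      · refine Submodule.span_mono (Set.image_mono ?_) (kAq_mem A b hjn hdim (by omega))
        intro y hy
        simp only [Set.mem_setOf_eq] at hy ⊢
        omega
      · -- l = m : use that the (m+1)-st coefficient vanishes
        rw [← (kq A b).sum_repr' (toE (A.mulVec (kq A b l)))]
        apply Submodule.sum_mem
        intro k _
        by_cases hk : (k : ℕ) ≤ m
        · exact Submodule.smul_mem _ _ (kq_mem_span A b hk)
        · by_cases hk2 : (k : ℕ) = m + 1
          · have hkeq : k = ⟨m + 1, hm1n⟩ := Fin.ext (by simp [hk2])
            have hleq : l = ⟨m, hmn⟩ := Fin.ext (by simp [heq])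
            have : ⟪kq A b k, toE (A.mulVec (kq A b l))⟫ = 0 := by
              have hb0 : kbeta A b j m = 0 := h0
              unfold kbeta at hb0
              rw [if_pos hm] at hb0
              rw [hkeq, hleq]
              have hq1 : kqq A b (m + 1) = kq A b ⟨m + 1, hm1n⟩ := by
                unfold kqq
                rw [dif_pos hm1n]
              have hq2 : kqq A b m = kq A b ⟨m, hmn⟩ := by
                unfold kqq
                rw [dif_pos hmn]
              rw [← hq1, ← hq2]
              exact hb0
            rw [this, zero_smul]
            exact Submodule.zero_mem _
          · have : ⟪kq A b k, toE (A.mulVec (kq A b l))⟫ = 0 := by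
              refine inner_zero_of_notmem (kq A b).orthonormal
                (s := {l' : Fin n | (l' : ℕ) ≤ m + 1}) (by simp; omega) ?_
              have : (l : ℕ) + 1 ≤ j := by omega
              have h5 := kAq_mem A b hjn hdim this
              rw [heq] at h5
              exact h5
            rw [this, zero_smul]
            exact Submodule.zero_mem _
    | zero =>
      rw [show toE (A.mulVec (0 : EuclideanSpace ℝ (Fin n))) = 0 from congrArg toE (mulVec_zero A)]
      exact Submodule.zero_mem _
    | add x y _ _ hx hy =>
      rw [WithLp.ofLp_add, show toE (A.mulVec (x + y)) = toE (A.mulVec x) + toE (A.mulVec y) from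
        congrArg toE (mulVec_add A x y)]
      exact Submodule.add_mem _ hx hy
    | smul c x _ hx =>
      have h9 : A.mulVec (c • x) = c • A.mulVec x := by rw [mulVec_smul]
      rw [WithLp.ofLp_smul, show toE (A.mulVec (c • x)) = c • toE (A.mulVec x) from congrArg toE h9]
      exact Submodule.smul_mem _ c hx
  -- hence A^(m+1) b lies in K^(m+1), contradiction
  have h1 : toE ((A ^ m).mulVec b) ∈ Submodule.span ℝ (kq A b '' {l : Fin n | (l : ℕ) ≤ m}) := by
    rw [kq_span A b hjn hdim (by omega)]
    exact mem_krylov A b (by omega)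
  have h2 := hW _ h1
  have h3 : toE ((A ^ (m + 1)).mulVec b) ∈ krylov A b (m + 1) := by
    rw [← kq_span A b hjn hdim (by omega : m ≤ j)]
    have : A.mulVec ((A ^ m).mulVec b) = (A ^ (m + 1)).mulVec b := by
      rw [mulVec_mulVec, ← pow_succ']
    rw [show toE ((A ^ (m + 1)).mulVec b) = toE (A.mulVec (toE ((A ^ m).mulVec b))) from
      (congrArg toE this).symm]
    exact h2
  exact kf_notmem A b hjn hdim (by omega) h3

lemma kbeta_ne_zero' {j : ℕ} (hjn : j + 1 ≤ n)
    (hdim : Module.finrank ℝ (krylov A b (j + 1)) = j + 1) (m : ℕ) :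
    kbeta A b j m ≠ 0 := by
  by_cases hm : m < j
  · exact kbeta_ne_zero A b hjn hdim hm
  · unfold kbeta
    rw [if_neg hm]
    exact one_ne_zero

end Aux

/-- There is a symmetric matrix `Ā` indistinguishable from `A` by `N_j(A,b)`
for which `b` is a cyclic vector, i.e. `K^n(Ā,b) = ℝ^n`. -/
theorem stmt11 {n j : ℕ} (A : Matrix (Fin n) (Fin n) ℝ)
    (b : EuclideanSpace ℝ (Fin n)) (hA : A.IsSymm) (hb : ‖b‖ = 1)
    (hjn : j + 1 ≤ n)
    (hdim : Module.finrank ℝ (krylov A b (j + 1)) = j + 1) :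
    ∃ Abar : Matrix (Fin n) (Fin n) ℝ, Abar.IsSymm ∧ indist A Abar b j ∧
      krylov Abar b n = ⊤ := by
  refine ⟨kAbar A b j, kAbar_symm A b j, ?_, ?_⟩
  · -- indistinguishability
    have hAgree : ∀ x ∈ krylov A b j, (kAbar A b j).mulVec x = A.mulVec x := by
      rcases Nat.eq_zero_or_pos j with hj0 | hj1
      · intro x hx
        subst hj0
        have hbot : krylov A b 0 = ⊥ := by
          unfold krylov
          convert Submodule.span_empty
          ext v
          simp
        rw [hbot, Submodule.mem_bot] at hx
        subst hx
        rw [WithLp.ofLp_zero, mulVec_zero, mulVec_zero]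
      · intro x hx
        rw [show j = (j - 1) + 1 by omega, ← kq_span A b hjn hdim (by omega : j - 1 ≤ j)] at hx
        clear hb
        induction hx using Submodule.span_induction with
        | mem v hv =>
          obtain ⟨l, hl, rfl⟩ := hv
          have hlj : (l : ℕ) < j := by
            have : (l : ℕ) ≤ j - 1 := hl
            omega
          exact congrArg WithLp.ofLp (kAbar_eq_A_on_q A b hA hjn hdim hlj)
        | zero => rw [WithLp.ofLp_zero, mulVec_zero, mulVec_zero]
        | add x y _ _ hx hy => rw [WithLp.ofLp_add, mulVec_add, mulVec_add, hx, hy]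
        | smul c x _ hx => rw [WithLp.ofLp_smul, mulVec_smul, mulVec_smul, hx]
    intro i
    induction i with
    | zero => intro _; rw [pow_zero, pow_zero]
    | succ i ih =>
      intro hij
      have h1 : (kAbar A b j ^ (i + 1)).mulVec b
          = (kAbar A b j).mulVec ((kAbar A b j ^ i).mulVec b) := by
        rw [pow_succ', ← mulVec_mulVec]
      have h2 : (kAbar A b j).mulVec ((A ^ i).mulVec b) = A.mulVec ((A ^ i).mulVec b) :=
        hAgree (toE ((A ^ i).mulVec b)) (mem_krylov A b (show i < j by omega))
      rw [h1, ih (by omega), h2, mulVec_mulVec, ← pow_succ']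
  · -- cyclicity
    have key : ∀ m : ℕ, ∀ hm : m < n, ∃ c : ℝ, c ≠ 0 ∧
        ∃ w ∈ Submodule.span ℝ (kq A b '' {l : Fin n | (l : ℕ) < m}),
          toE ((kAbar A b j ^ m).mulVec b) = c • kq A b ⟨m, hm⟩ + w := by
      intro m
      induction m with
      | zero =>
        intro hm
        have h1 : toE ((A ^ 0).mulVec b) ∈ krylov A b 1 := mem_krylov A b Nat.zero_lt_one
        rw [← kq_span A b hjn hdim (Nat.zero_le j)] at h1
        have hset : {l : Fin n | (l : ℕ) ≤ 0} = {(⟨0, hm⟩ : Fin n)} := by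
          ext l
          simp [Fin.ext_iff, Nat.le_zero]
        rw [hset, Set.image_singleton] at h1
        obtain ⟨c, hc⟩ := Submodule.mem_span_singleton.mp h1
        have hbc : b = c • kq A b ⟨0, hm⟩ := by
          rw [hc]
          show toE b = toE ((A ^ 0).mulVec b)
          rw [pow_zero, one_mulVec]
        refine ⟨c, ?_, 0, Submodule.zero_mem _, ?_⟩
        · intro h0
          rw [h0, zero_smul] at hbc
          rw [hbc] at hb
          simp at hb
        · rw [add_zero]
          show toE ((kAbar A b j ^ 0).mulVec b) = c • kq A b ⟨0, hm⟩
          rw [pow_zero, one_mulVec, ← hbc]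
          rfl
      | succ m ihm =>
        intro hm1
        have hm : m < n := by omega
        obtain ⟨c, hc0, w, hw, hrep⟩ := ihm hm
        have hbne := kbeta_ne_zero' A b hjn hdim m
        -- expansion of Ā qₘ
        have hexp : toE ((kAbar A b j).mulVec (kq A b ⟨m, hm⟩))
            = kbeta A b j m • kq A b ⟨m + 1, hm1⟩ +
              ∑ k ∈ Finset.univ.erase (⟨m + 1, hm1⟩ : Fin n),
                kT A b j k ⟨m, hm⟩ • kq A b k := by
          rw [kAbar_mulVec, ← Finset.add_sum_erase _ _ (Finset.mem_univ (⟨m + 1, hm1⟩ : Fin n)),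
            kT_subdiag A b j hm1 hm]
        have hrest : (∑ k ∈ Finset.univ.erase (⟨m + 1, hm1⟩ : Fin n),
              kT A b j k ⟨m, hm⟩ • kq A b k)
            ∈ Submodule.span ℝ (kq A b '' {l : Fin n | (l : ℕ) < m + 1}) := by
          apply Submodule.sum_mem
          intro k hk
          have hkne : k ≠ ⟨m + 1, hm1⟩ := Finset.ne_of_mem_erase hk
          by_cases hkm : (k : ℕ) ≤ m
          · exact Submodule.smul_mem _ _ (kq_mem_span A b (by simpa using Nat.lt_succ_of_le hkm))
          · have : (k : ℕ) ≠ m + 1 := fun h => hkne (Fin.ext (by simp [h]))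
            rw [kT_zero_of_gt A b j (by simp; omega), zero_smul]
            exact Submodule.zero_mem _
        -- Ā maps spans one step up
        have hmap : ∀ M : ℕ, ∀ x ∈ Submodule.span ℝ (kq A b '' {l : Fin n | (l : ℕ) < M}),
            toE ((kAbar A b j).mulVec x)
              ∈ Submodule.span ℝ (kq A b '' {l : Fin n | (l : ℕ) < M + 1}) := by
          intro M x hx
          induction hx using Submodule.span_induction with
          | mem v hv =>
            obtain ⟨l, hl, rfl⟩ := hv
            have hlM : (l : ℕ) < M := hl
            refine Submodule.span_mono (Set.image_mono ?_) (kAbarq_mem A b j l)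
            intro y hy
            simp only [Set.mem_setOf_eq] at hy ⊢
            omega
          | zero =>
            rw [show toE ((kAbar A b j).mulVec (0 : EuclideanSpace ℝ (Fin n))) = 0 from
              congrArg toE (mulVec_zero _)]
            exact Submodule.zero_mem _
          | add x y _ _ hx hy =>
            rw [WithLp.ofLp_add, show toE ((kAbar A b j).mulVec (x + y))
                = toE ((kAbar A b j).mulVec x) + toE ((kAbar A b j).mulVec y) from
              congrArg toE (mulVec_add _ x y)]
            exact Submodule.add_mem _ hx hy
          | smul c x _ hx =>
            have h9 : (kAbar A b j).mulVec (c • x) = c • (kAbar A b j).mulVec x := by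
              rw [mulVec_smul]
            rw [WithLp.ofLp_smul, show toE ((kAbar A b j).mulVec (c • x)) = c • toE ((kAbar A b j).mulVec x) from
              congrArg toE h9]
            exact Submodule.smul_mem _ c hx
        refine ⟨c * kbeta A b j m, mul_ne_zero hc0 hbne,
          c • (∑ k ∈ Finset.univ.erase (⟨m + 1, hm1⟩ : Fin n),
            kT A b j k ⟨m, hm⟩ • kq A b k) + toE ((kAbar A b j).mulVec w), ?_, ?_⟩
        · apply Submodule.add_mem
          · exact Submodule.smul_mem _ _ hrest
          · exact hmap m w hw
        · have h1 : (kAbar A b j ^ (m + 1)).mulVec b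
              = (kAbar A b j).mulVec ((kAbar A b j ^ m).mulVec b) := by
            rw [pow_succ', ← mulVec_mulVec]
          have h2 : toE ((kAbar A b j ^ (m + 1)).mulVec b)
              = toE ((kAbar A b j).mulVec (c • kq A b ⟨m, hm⟩ + w)) := by
            rw [h1]
            exact congrArg toE (congrArg (fun v => (kAbar A b j).mulVec (WithLp.ofLp v)) hrep)
          have h3 : (kAbar A b j).mulVec (c • kq A b ⟨m, hm⟩ + w)
              = c • (kAbar A b j).mulVec (kq A b ⟨m, hm⟩) + (kAbar A b j).mulVec w := by
            rw [mulVec_add, mulVec_smul]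
          rw [h2, show toE ((kAbar A b j).mulVec (c • kq A b ⟨m, hm⟩ + w))
              = c • toE ((kAbar A b j).mulVec (kq A b ⟨m, hm⟩)) + toE ((kAbar A b j).mulVec w)
            from congrArg toE h3, hexp, smul_add, smul_smul, add_assoc]
    -- every basis vector is in the Krylov space of Ā
    have hqmem : ∀ m : ℕ, ∀ hm : m < n, kq A b ⟨m, hm⟩ ∈ krylov (kAbar A b j) b n := by
      intro m
      induction m using Nat.strong_induction_on with
      | _ m ihm =>
        intro hm
        obtain ⟨c, hc0, w, hw, hrep⟩ := key m hm
        have hwmem : w ∈ krylov (kAbar A b j) b n := by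
          have hle : Submodule.span ℝ (kq A b '' {l : Fin n | (l : ℕ) < m})
              ≤ krylov (kAbar A b j) b n := by
            rw [Submodule.span_le]
            rintro v ⟨l, hl, rfl⟩
            have hlm : (l : ℕ) < m := hl
            have := ihm (l : ℕ) hlm l.isLt
            rwa [Fin.eta] at this
          exact hle hw
        have habm : toE ((kAbar A b j ^ m).mulVec b) ∈ krylov (kAbar A b j) b n :=
          mem_krylov _ b hm
        have hqeq : kq A b ⟨m, hm⟩ = c⁻¹ • (toE ((kAbar A b j ^ m).mulVec b) - w) := by
          rw [hrep, add_sub_cancel_right, smul_smul, inv_mul_cancel₀ hc0, one_smul]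
        rw [hqeq]
        exact Submodule.smul_mem _ _ (Submodule.sub_mem _ habm hwmem)
    rw [eq_top_iff]
    intro x _
    rw [← (kq A b).sum_repr' x]
    apply Submodule.sum_mem
    intro k _
    apply Submodule.smul_mem
    have := hqmem (k : ℕ) k.isLt
    rwa [Fin.eta] at this
end
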